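/- Let G be a finite group, let S and T be G-sets, and suppose there exists a G-equivariant map ε : T → S. If f : ℤ[S]₀ → ℤ[T] is an additive map such that Σ_{g∈G} g•f = 0 in Hom(ℤ[S]₀,ℤ[T]), then f lies in the additive subgroup of Hom(ℤ[S]₀,ℤ[T]) generated by the elements g•h − h with g ∈ G and h ∈ Hom(ℤ[S]₀,ℤ[T]). Equivalently, Ĥ^{-1}(G, Hom(ℤ[S]₀, ℤ[T])) = 0. -/

import Mathlib

/-!
Extend `f` to `Φ : ℤ[S] → ℤ[T]` through a retraction `ℤ[S] → ℤ[S]₀`. The norm of `Φ` vanishes on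
`ℤ[S]₀`, so it is `x ↦ aug(x) • y` for some `y ∈ ℤ[T]`, and evaluating at `ε t` shows that the
coefficients of `y` are those of the norm of the function `t ↦ Φ(ε t)(t)`; hence `y` is a norm
`∑ g • z` of some `z ∈ ℤ[T]`, and replacing `Φ` by `Φ - aug(·) • z` gives an extension of norm
zero.

Through its matrix coefficients `Φ(s)(t)`, `Hom(ℤ[S], ℤ[T])` is a module of functions on the
`G`-set `S × T`, where `Ĥ⁻¹` vanishes: choose a representative `p` of each orbit and, for each
`y` in it, an element `τ y` with `τ y • p = y`. Then `c = ∑_y c(y) (τ y • δ_p - δ_p)` on the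
orbit, because the orbit sum of `c` is zero: `|Stab p|` times it is the norm of `c` at `p`.
-/

/-- The augmentation map `ℤ[S] → ℤ`, `∑ n_s · s ↦ ∑ n_s`. -/
noncomputable def aug (S : Type*) : (S →₀ ℤ) →+ ℤ :=
  Finsupp.liftAddHom fun _ => AddMonoidHom.id ℤ

/-- The action of `g : G` on `ℤ[S]`, permuting the basis elements. -/
noncomputable def permHom {G : Type*} [Group G] {S : Type*} [MulAction G S]
    (g : G) : (S →₀ ℤ) →+ (S →₀ ℤ) :=
  Finsupp.mapDomain.addMonoidHom (fun s => g • s)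

lemma aug_permHom {G : Type*} [Group G] {S : Type*} [MulAction G S] (g : G) (x : S →₀ ℤ) :
    aug S (permHom g x) = aug S x := by
  have h : (aug S).comp (permHom (G := G) (S := S) g) = aug S := by
    apply Finsupp.addHom_ext
    intro s n
    simp [aug, permHom, Finsupp.mapDomain.addMonoidHom, Finsupp.mapDomain_single]
  exact DFunLike.congr_fun h x

/-- The action of `g : G` on `ℤ[S]₀ = ker(aug)`. -/
noncomputable def permHom0 {G : Type*} [Group G] {S : Type*} [MulAction G S]
    (g : G) : ↥(aug S).ker →+ ↥(aug S).ker :=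
  AddMonoidHom.codRestrict ((permHom g).comp (aug S).ker.subtype) (aug S).ker
    (fun x => by
      have hx : aug S (x : S →₀ ℤ) = 0 := AddMonoidHom.mem_ker.mp x.2
      simpa [AddMonoidHom.mem_ker, aug_permHom] using hx)

/-- The action of `g : G` on `Hom(ℤ[S]₀, ℤ[T])`: `(g • f)(m) = g • f (g⁻¹ • m)`. -/
noncomputable def homAct0 {G S T : Type*} [Group G] [MulAction G S] [MulAction G T]
    (g : G) (f : ↥(aug S).ker →+ (T →₀ ℤ)) : ↥(aug S).ker →+ (T →₀ ℤ) :=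
  (permHom g).comp (f.comp (permHom0 g⁻¹))

section OrbitDecomposition

variable {G X : Type*} [Group G] [Fintype G] [MulAction G X]

omit [Fintype G] in
lemma exists_orbit_transversal :
    ∃ (R : X → X) (τ : X → G), (∀ (g : G) (x : X), R (g • x) = R x) ∧ ∀ x, τ x • R x = x := by
  let R : X → X := fun x => (Quotient.mk (MulAction.orbitRel G X) x).out
  have hR : ∀ x, ∃ g : G, g • R x = x := fun x =>
    MulAction.mem_orbit_iff.mp (MulAction.mem_orbit_symm.mp (MulAction.orbitRel_apply.mp
      (Quotient.mk_out (s := MulAction.orbitRel G X) x)))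
  choose τ hτ using hR
  exact ⟨R, τ, fun g x => congrArg Quotient.out (Quotient.sound (MulAction.mem_orbit x g)), hτ⟩

lemma sum_ite_transversal_eq_zero [DecidableEq G] (c : X → ℤ) (p : X) (τ : X → G)
    (hτ : ∀ g : G, τ (g • p) • p = g • p) (hc : ∑ g : G, c (g • p) = 0) :
    ∑ g : G, (if τ (g • p) = g then c (g • p) else 0) = 0 := by
  classical
  set A := ∑ g : G, (if τ (g • p) = g then c (g • p) else 0)
  have hshift : ∀ k : MulAction.stabilizer G p,
      ∑ g : G, (if τ (g • p) = g * k then c (g • p) else 0) = A := fun k =>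
    Fintype.sum_equiv (Equiv.mulRight (k : G)) _ _ fun g => by
      simp [mul_smul, MulAction.mem_stabilizer_iff.mp k.2]
  have hunique : ∀ g : G,
      ∑ k : MulAction.stabilizer G p, (if τ (g • p) = g * k then c (g • p) else 0) = c (g • p) := by
    intro g
    have hk : g⁻¹ * τ (g • p) ∈ MulAction.stabilizer G p := by
      rw [MulAction.mem_stabilizer_iff, mul_smul, hτ, inv_smul_smul]
    rw [Fintype.sum_eq_single ⟨_, hk⟩ fun k hne => if_neg fun h => hne (Subtype.ext (by simp [h])),
      if_pos (by simp)]
  have hcard : Fintype.card (MulAction.stabilizer G p) • A = 0 := by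
    rw [← hc, ← Finset.card_univ, ← Finset.sum_const, ← Finset.sum_congr rfl fun k _ => hshift k,
      Finset.sum_comm]
    exact Finset.sum_congr rfl fun g _ => hunique g
  exact (smul_eq_zero.mp hcard).resolve_left Fintype.card_ne_zero

theorem exists_eq_sum_sub_of_sum_smul_eq_zero (c : X → ℤ) (hc : ∀ x, ∑ g : G, c (g • x) = 0) :
    ∃ d : G → X → ℤ, (∀ g x, d g x ≠ 0 → c (g • x) ≠ 0) ∧
      ∀ x, c x = ∑ g : G, (d g (g⁻¹ • x) - d g x) := by
  classical
  obtain ⟨R, τ, hR, hτ⟩ := exists_orbit_transversal (G := G) (X := X)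
  refine ⟨fun g x => if R x = x ∧ τ (g • x) = g then c (g • x) else 0, ?_, fun x => ?_⟩
  · intro g x h
    contrapose! h
    simp [h]
  · have hinv : ∑ g : G, (if R (g⁻¹ • x) = g⁻¹ • x ∧ τ (g • g⁻¹ • x) = g
        then c (g • g⁻¹ • x) else 0) = c x := by
      simp only [hR, smul_inv_smul]
      rw [Fintype.sum_eq_single (τ x) fun g hg => if_neg fun h => hg h.2.symm,
        if_pos ⟨eq_inv_smul_iff.mpr (hτ x), rfl⟩]
    have hrep : ∑ g : G, (if R x = x ∧ τ (g • x) = g then c (g • x) else 0) = 0 := by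
      by_cases hx : R x = x
      · simp only [hx, true_and]
        refine sum_ite_transversal_eq_zero c x τ (fun g => ?_) (hc x)
        simpa [hR, hx] using hτ (g • x)
      · simp [hx]
    rw [Finset.sum_sub_distrib, hinv, hrep, sub_zero]

end OrbitDecomposition

section Hom

variable {G S T : Type*} [Group G] [MulAction G S] [MulAction G T]

lemma aug_single (s : S) (n : ℤ) : aug S (Finsupp.single s n) = n := by
  simp [aug]

omit [MulAction G S] in
lemma permHom_single (g : G) (t : T) (n : ℤ) :
    permHom g (Finsupp.single t n) = Finsupp.single (g • t) n :=
  Finsupp.mapDomain_single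

omit [MulAction G S] in
lemma permHom_apply (g : G) (y : T →₀ ℤ) (t : T) : permHom g y t = y (g⁻¹ • t) := by
  conv_lhs => rw [← smul_inv_smul g t]
  exact Finsupp.mapDomain_apply (MulAction.injective g) y _

noncomputable def homAct (g : G) (Φ : (S →₀ ℤ) →+ (T →₀ ℤ)) : (S →₀ ℤ) →+ (T →₀ ℤ) :=
  (permHom g).comp (Φ.comp (permHom g⁻¹))

lemma homAct_sub (g : G) (Φ Ψ : (S →₀ ℤ) →+ (T →₀ ℤ)) :
    homAct g (Φ - Ψ) = homAct g Φ - homAct g Ψ := by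
  ext x : 1
  simp [homAct]

lemma homAct_comp_aug (g : G) (z : T →₀ ℤ) :
    homAct g ((zmultiplesHom _ z).comp (aug S)) = (zmultiplesHom _ (permHom g z)).comp (aug S) :=
  AddMonoidHom.ext fun x => by simp [homAct, aug_permHom]

lemma homAct_comp_subtype (g : G) (Φ : (S →₀ ℤ) →+ (T →₀ ℤ)) :
    (homAct g Φ).comp (aug S).ker.subtype = homAct0 g (Φ.comp (aug S).ker.subtype) :=
  rfl

noncomputable def coeff : ((S →₀ ℤ) →+ (T →₀ ℤ)) →+ (S × T → ℤ) where
  toFun Φ p := Φ (Finsupp.single p.1 1) p.2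
  map_zero' := rfl
  map_add' _ _ := rfl

omit [MulAction G S] [MulAction G T] in
lemma coeff_apply (Φ : (S →₀ ℤ) →+ (T →₀ ℤ)) (s : S) (t : T) :
    coeff Φ (s, t) = Φ (Finsupp.single s 1) t :=
  rfl

lemma coeff_homAct (g : G) (Φ : (S →₀ ℤ) →+ (T →₀ ℤ)) (p : S × T) :
    coeff (homAct g Φ) p = coeff Φ (g⁻¹ • p) := by
  change permHom g (Φ (permHom g⁻¹ (Finsupp.single p.1 1))) p.2 =
    Φ (Finsupp.single (g⁻¹ • p.1) 1) (g⁻¹ • p.2)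
  rw [permHom_single, permHom_apply]

omit [MulAction G S] [MulAction G T] in
lemma coeff_injective : Function.Injective (coeff (S := S) (T := T)) := by
  intro Φ Ψ h
  refine Finsupp.addHom_ext fun s n => ?_
  ext t
  rw [← mul_one n, ← smul_eq_mul, ← Finsupp.smul_single, map_zsmul, map_zsmul]
  simp only [Finsupp.smul_apply, ← coeff_apply, h]

omit [MulAction G S] [MulAction G T] in
lemma exists_coeff_eq (c : S × T → ℤ) (hc : ∀ s, (Function.support fun t => c (s, t)).Finite) :
    ∃ Φ : (S →₀ ℤ) →+ (T →₀ ℤ), coeff Φ = c := by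
  refine ⟨Finsupp.liftAddHom fun s => zmultiplesHom _ (Finsupp.ofSupportFinite _ (hc s)), ?_⟩
  funext p
  change Finsupp.liftAddHom (fun s => zmultiplesHom _ (Finsupp.ofSupportFinite _ (hc s)))
    (Finsupp.single p.1 1) p.2 = c p
  simp [Finsupp.ofSupportFinite_coe]

theorem exists_eq_sum_homAct_sub [Fintype G] (Φ : (S →₀ ℤ) →+ (T →₀ ℤ))
    (hΦ : ∑ g : G, homAct g Φ = 0) :
    ∃ H : G → ((S →₀ ℤ) →+ (T →₀ ℤ)), Φ = ∑ g : G, (homAct g (H g) - H g) := by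
  have hc : ∀ p : S × T, ∑ g : G, coeff Φ (g • p) = 0 := fun p => by
    have := congrFun (congrArg coeff hΦ) p
    rw [map_sum, Finset.sum_apply] at this
    rw [← Equiv.sum_comp (Equiv.inv G)]
    simpa [coeff_homAct] using this
  obtain ⟨d, hd_supp, hd⟩ := exists_eq_sum_sub_of_sum_smul_eq_zero (coeff Φ) hc
  have hH : ∀ g, ∃ H : (S →₀ ℤ) →+ (T →₀ ℤ), coeff H = d g := fun g =>
    exists_coeff_eq (d g) fun s =>
      ((Φ (Finsupp.single (g • s) 1)).hasFiniteSupport.preimage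
        (MulAction.injective g).injOn).subset fun t ht => hd_supp g (s, t) ht
  choose H hH using hH
  refine ⟨H, coeff_injective (funext fun p => ?_)⟩
  rw [hd, map_sum, Finset.sum_apply]
  simp [coeff_homAct, hH]

end Hom

section Extension

variable {G S T : Type*} [Group G] [MulAction G S] [MulAction G T]

omit [MulAction G S] in
lemma exists_sum_permHom_eq [Fintype G] (y : T →₀ ℤ) (w : T → ℤ)
    (hy : ∀ t, y t = ∑ g : G, w (g⁻¹ • t)) : ∃ z : T →₀ ℤ, ∑ g : G, permHom g z = y := by
  classical
  -- `y` is `G`-invariant, so truncating `w` to the support of `y` does not change its norm.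
  have hinv : ∀ (g : G) (t : T), y (g⁻¹ • t) = y t := fun g t => by
    rw [hy, hy, ← Equiv.sum_comp (Equiv.mulLeft g) (fun h => w (h⁻¹ • t))]
    simp [mul_smul]
  refine ⟨Finsupp.onFinset y.support (fun t => if y t = 0 then 0 else w t) fun t ht => ?_, ?_⟩
  · simpa using fun h => ht (if_pos h)
  · ext t
    simp only [Finsupp.finsetSum_apply, permHom_apply, Finsupp.onFinset_apply, hinv]
    split_ifs with h0
    · simp [h0]
    · exact (hy t).symm

omit [MulAction G S] in
lemma map_eq_aug_smul_of_comp_subtype_eq_zero {M : Type*} [AddCommGroup M]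
    (Ψ : (S →₀ ℤ) →+ M) (hΨ : Ψ.comp (aug S).ker.subtype = 0) (s : S) (x : S →₀ ℤ) :
    Ψ x = aug S x • Ψ (Finsupp.single s 1) := by
  have hmem : x - aug S x • Finsupp.single s 1 ∈ (aug S).ker := by
    simp [AddMonoidHom.mem_ker, aug_single]
  have h0 : Ψ (x - aug S x • Finsupp.single s 1) = 0 := DFunLike.congr_fun hΨ ⟨_, hmem⟩
  rwa [map_sub, map_zsmul, sub_eq_zero] at h0

noncomputable def kerRetraction (s₀ : S) : (S →₀ ℤ) →+ (aug S).ker :=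
  (AddMonoidHom.id _ - (zmultiplesHom _ (Finsupp.single s₀ 1)).comp (aug S)).codRestrict _
    fun x => by simp [AddMonoidHom.mem_ker, aug_single]

lemma kerRetraction_comp_subtype (s₀ : S) :
    (kerRetraction s₀).comp (aug S).ker.subtype = AddMonoidHom.id _ :=
  AddMonoidHom.ext fun x => Subtype.ext (by simp [kerRetraction, AddMonoidHom.mem_ker.mp x.2])

theorem exists_extension_sum_homAct_eq_zero [Fintype G] (ε : T → S)
    (hε : ∀ (g : G) (t : T), ε (g • t) = g • ε t) (s₀ : S) (f : (aug S).ker →+ (T →₀ ℤ))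
    (hf : ∑ g : G, homAct0 g f = 0) :
    ∃ Φ : (S →₀ ℤ) →+ (T →₀ ℤ), Φ.comp (aug S).ker.subtype = f ∧ ∑ g : G, homAct g Φ = 0 := by
  set F := f.comp (kerRetraction s₀)
  have hF : F.comp (aug S).ker.subtype = f := by
    rw [AddMonoidHom.comp_assoc, kerRetraction_comp_subtype, AddMonoidHom.comp_id]
  have hNF := map_eq_aug_smul_of_comp_subtype_eq_zero (∑ g : G, homAct g F) <| by
    rw [← hF] at hf
    ext x : 1
    simpa [AddMonoidHom.finsetSum_apply, ← homAct_comp_subtype] using DFunLike.congr_fun hf x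
  obtain ⟨z, hz⟩ := exists_sum_permHom_eq ((∑ g : G, homAct g F) (Finsupp.single s₀ 1))
    (fun t => coeff F (ε t, t)) fun t => by
      rw [hNF (ε t), aug_single, one_smul, ← coeff_apply, map_sum, Finset.sum_apply]
      simp only [coeff_homAct, Prod.smul_mk]
      exact Finset.sum_congr rfl fun g _ => by rw [hε]
  refine ⟨F - (zmultiplesHom _ z).comp (aug S), AddMonoidHom.ext fun x => ?_, ?_⟩
  · simp [AddMonoidHom.mem_ker.mp x.2, ← hF]
  · refine AddMonoidHom.ext fun x => ?_
    simp [homAct_sub, Finset.sum_sub_distrib, homAct_comp_aug, AddMonoidHom.finsetSum_apply,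
      ← Finset.smul_sum]
    rw [hz, ← hNF s₀ x, AddMonoidHom.finsetSum_apply, sub_self]

end Extension

/-- Lemma "H-10S(2)": if there is a `G`-map `ε : T → S`, then
`Ĥ⁻¹(G, Hom(ℤ[S]₀, ℤ[T])) = 0`. -/
theorem stmt3 {G S T : Type*} [Group G] [Fintype G] [MulAction G S] [MulAction G T]
    (ε : T → S) (hε : ∀ (g : G) (t : T), ε (g • t) = g • ε t)
    (f : ↥(aug S).ker →+ (T →₀ ℤ))
    (hf : (∑ g : G, homAct0 g f) = 0) :
    f ∈ AddSubgroup.closure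
      {x : ↥(aug S).ker →+ (T →₀ ℤ) |
        ∃ (g : G) (h : ↥(aug S).ker →+ (T →₀ ℤ)), x = homAct0 g h - h} := by
  rcases isEmpty_or_nonempty T with hT | ⟨⟨t₀⟩⟩
  · rw [show f = 0 from AddMonoidHom.ext fun _ => Subsingleton.elim _ _]
    exact zero_mem _
  obtain ⟨Φ, rfl, hΦ⟩ := exists_extension_sum_homAct_eq_zero ε hε (ε t₀) f hf
  obtain ⟨H, rfl⟩ := exists_eq_sum_homAct_sub Φ hΦ
  have hrestrict : (∑ g : G, (homAct g (H g) - H g)).comp (aug S).ker.subtype =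
      ∑ g : G, (homAct0 g ((H g).comp (aug S).ker.subtype) - (H g).comp (aug S).ker.subtype) := by
    ext x : 1
    simp [AddMonoidHom.finsetSum_apply, ← homAct_comp_subtype]
  rw [hrestrict]
  exact sum_mem fun g _ => AddSubgroup.subset_closure ⟨g, _, rfl⟩
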